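/- Let r be a noncommutative rational expression in the variables ⋃_i X^(i). Suppose (a', a^(2),…,a^(G)) lies in the mp-domain of r at level (n'_1, n_2,…,n_G) and (a'', a^(2),…,a^(G)) lies in the mp-domain of r at level (n''_1, n_2,…,n_G), where a' ∈ Mat_{n'_1}(k)^{g_1} and a'' ∈ Mat_{n''_1}(k)^{g_1}. Then (a'⊕a'', a^(2),…,a^(G)) lies in the mp-domain of r at level (n'_1+n''_1, n_2,…,n_G), where a'⊕a'' denotes the componentwise block-diagonal direct sum, and under the natural block identification of Mat_{(n'_1+n''_1)·n_2⋯n_G}(k) one has r(a'⊕a'', a^(2),…,a^(G))^mp = r(a', a^(2),…,a^(G))^mp ⊕ r(a'', a^(2),…,a^(G))^mp. -/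

import Mathlib

/-!
Noncommutative rational expressions and multipartite (mp) evaluations,
following "Multipartite rational functions" by Klep, Vinnikov, Volčič.
-/

/-- Formal noncommutative rational expressions over `k` in variables `X`. -/
inductive RatExpr (k : Type*) (X : Type*) : Type _
  | const : k → RatExpr k X
  | var : X → RatExpr k X
  | add : RatExpr k X → RatExpr k X → RatExpr k X
  | mul : RatExpr k X → RatExpr k X → RatExpr k X
  | inv : RatExpr k X → RatExpr k X

open Classical in
/-- Partial evaluation of a rational expression in a `k`-algebra `R`,
given an assignment `f` of the variables. An inverse is evaluated only
when the evaluation of the sub-expression is invertible (a unit) in `R`. -/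
noncomputable def RatExpr.eval {k X R : Type*} [CommRing k] [Ring R] [Algebra k R]
    (f : X → R) : RatExpr k X → Option R
  | .const c => some (algebraMap k R c)
  | .var x => some (f x)
  | .add r s => (r.eval f).bind fun a => (s.eval f).map fun b => a + b
  | .mul r s => (r.eval f).bind fun a => (s.eval f).map fun b => a * b
  | .inv r => (r.eval f).bind fun a => if IsUnit a then some (Ring.inverse a) else none

/-- `tau n i A = I ⊗ ⋯ ⊗ A ⊗ ⋯ ⊗ I`, the Kronecker product with `A` in the `i`-th
slot and identity matrices elsewhere, realized on the index set `∀ j, Fin (n j)`. -/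
def tau {k : Type*} [CommRing k] {ι : Type*} [Fintype ι] [DecidableEq ι]
    (n : ι → ℕ) (i : ι) (A : Matrix (Fin (n i)) (Fin (n i)) k) :
    Matrix (∀ j, Fin (n j)) (∀ j, Fin (n j)) k :=
  Matrix.of fun α β =>
    A (α i) (β i) * ∏ j ∈ Finset.univ.erase i, (if α j = β j then (1 : k) else 0)

/-- The mp-evaluation of a rational expression in the variables `Σ i, Fin (g i)`
at the tuple `a` at level `n`:  `X^(i)_j` is sent to `tau n i (a i j)`.
The result is `none` exactly when `a` is not in the mp-domain of `r` at level `n`. -/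
noncomputable def mpEval {k : Type*} [Field k] {ι : Type*} [Fintype ι] [DecidableEq ι]
    (g n : ι → ℕ) (r : RatExpr k (Σ i : ι, Fin (g i)))
    (a : ∀ i, Fin (g i) → Matrix (Fin (n i)) (Fin (n i)) k) :
    Option (Matrix (∀ j, Fin (n j)) (∀ j, Fin (n j)) k) :=
  r.eval fun v => tau n v.1 (a v.1 v.2)

section FirstPartSpecial

variable {k : Type*} [Field k] {G : ℕ} (g₁ : ℕ) (g n : Fin G → ℕ)

/-- `tau` for the distinguished first tensor factor, whose index type is `d`:
`A ⊗ I_{n_2} ⊗ ⋯ ⊗ I_{n_G}`. -/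
def tauFst {d : Type*} [Fintype d] [DecidableEq d] (A : Matrix d d k) :
    Matrix (d × ∀ j, Fin (n j)) (d × ∀ j, Fin (n j)) k :=
  Matrix.of fun α β => A α.1 β.1 * (if α.2 = β.2 then (1 : k) else 0)

/-- `tau` for the remaining tensor factors, with the distinguished first factor of index
type `d`: `I_d ⊗ I ⊗ ⋯ ⊗ A ⊗ ⋯ ⊗ I` with `A` in slot `i` of the tail. -/
def tauTail {d : Type*} [Fintype d] [DecidableEq d] (i : Fin G)
    (A : Matrix (Fin (n i)) (Fin (n i)) k) :
    Matrix (d × ∀ j, Fin (n j)) (d × ∀ j, Fin (n j)) k :=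
  Matrix.of fun α β => (if α.1 = β.1 then (1 : k) else 0) * A (α.2 i) (β.2 i) *
    ∏ j ∈ Finset.univ.erase i, (if α.2 j = β.2 j then (1 : k) else 0)

/-- mp-evaluation of a rational expression in the variables
`X^(1) ∪ (X^(2) ∪ ⋯ ∪ X^(G))`, where the first part is evaluated at matrices indexed by a
type `d` and the remaining parts at matrices of sizes `n_i`. -/
noncomputable def mpEvalFst (r : RatExpr k ((Fin g₁) ⊕ (Σ i : Fin G, Fin (g i))))
    {d : Type*} [Fintype d] [DecidableEq d]
    (a₁ : Fin g₁ → Matrix d d k)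
    (a : ∀ i, Fin (g i) → Matrix (Fin (n i)) (Fin (n i)) k) :
    Option (Matrix (d × ∀ j, Fin (n j)) (d × ∀ j, Fin (n j)) k) :=
  r.eval (Sum.elim (fun j => tauFst n (a₁ j)) (fun v => tauTail n v.1 (a v.1 v.2)))

end FirstPartSpecial

/-- The natural block identification
`Fin (n₁' + n₁'') × Π ≃ (Fin n₁' × Π) ⊕ (Fin n₁'' × Π)`. -/
def blockEquiv {G : ℕ} (n : Fin G → ℕ) (n₁' n₁'' : ℕ) :
    (Fin (n₁' + n₁'') × ∀ j, Fin (n j)) ≃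
      ((Fin n₁' × ∀ j, Fin (n j)) ⊕ (Fin n₁'' × ∀ j, Fin (n j))) :=
  (Equiv.prodCongr finSumFinEquiv.symm (Equiv.refl _)).trans
    (Equiv.sumProdDistrib _ _ _)

/-! The block-diagonal embedding `(M, N) ↦ M ⊕ N` is a unital algebra homomorphism from the
product algebra, and a rational expression defined at two assignments is defined at the paired
assignment in the product algebra, with the paired value. Algebra homomorphisms carry units to
units, so they preserve evaluations wherever these are defined. Under the block identification
each mp-generator at level `n₁' + n₁''` is the image of the pair of generators at levels `n₁'`
and `n₁''`. -/

theorem map_ringInverse_of_isUnit {M N F : Type*} [MonoidWithZero M] [MonoidWithZero N]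
    [FunLike F M N] [MonoidHomClass F M N] (φ : F) {a : M} (ha : IsUnit a) :
    φ (Ring.inverse a) = Ring.inverse (φ a) := by
  obtain ⟨u, rfl⟩ := ha
  change _ = Ring.inverse (Units.map (φ : M →* N) u : N)
  rw [Ring.inverse_unit, Ring.inverse_unit, Units.coe_map_inv]
  rfl

theorem Ring.inverse_prod_of_isUnit {R S : Type*} [MonoidWithZero R] [MonoidWithZero S]
    {p : R × S} (hp : IsUnit p) : Ring.inverse p = (Ring.inverse p.1, Ring.inverse p.2) :=
  Prod.ext (map_ringInverse_of_isUnit (MonoidHom.fst R S) hp)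
    (map_ringInverse_of_isUnit (MonoidHom.snd R S) hp)

namespace RatExpr

variable {k X R S : Type*} [CommRing k] [Ring R] [Ring S] [Algebra k R] [Algebra k S]

theorem eval_algHom_comp (φ : R →ₐ[k] S) {f : X → R} {r : RatExpr k X} {E : R}
    (h : r.eval f = some E) : r.eval (φ ∘ f) = some (φ E) := by
  induction r generalizing E with
  | const c =>
    simp only [eval, Option.some.injEq] at h ⊢
    rw [← h, φ.commutes]
  | var x => simp_all [eval]
  | add r s ihr ihs =>
    simp only [eval, Option.bind_eq_some_iff, Option.map_eq_some_iff] at h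
    obtain ⟨a, ha, b, hb, rfl⟩ := h
    simp [eval, ihr ha, ihs hb]
  | mul r s ihr ihs =>
    simp only [eval, Option.bind_eq_some_iff, Option.map_eq_some_iff] at h
    obtain ⟨a, ha, b, hb, rfl⟩ := h
    simp [eval, ihr ha, ihs hb]
  | inv r ih =>
    simp only [eval, Option.bind_eq_some_iff] at h
    obtain ⟨a, ha, h⟩ := h
    split_ifs at h with hu
    cases h
    simp [eval, ih ha, hu.map φ, ← map_ringInverse_of_isUnit φ hu]

theorem eval_prod {f : X → R} {g : X → S} {r : RatExpr k X} {E₁ : R} {E₂ : S}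
    (h₁ : r.eval f = some E₁) (h₂ : r.eval g = some E₂) :
    r.eval (fun x => (f x, g x)) = some (E₁, E₂) := by
  induction r generalizing E₁ E₂ with
  | const c => simp_all [eval]
  | var x => simp_all [eval]
  | add r s ihr ihs =>
    simp only [eval, Option.bind_eq_some_iff, Option.map_eq_some_iff] at h₁ h₂
    obtain ⟨a₁, ha₁, b₁, hb₁, rfl⟩ := h₁
    obtain ⟨a₂, ha₂, b₂, hb₂, rfl⟩ := h₂
    simp [eval, ihr ha₁ ha₂, ihs hb₁ hb₂]
  | mul r s ihr ihs =>
    simp only [eval, Option.bind_eq_some_iff, Option.map_eq_some_iff] at h₁ h₂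
    obtain ⟨a₁, ha₁, b₁, hb₁, rfl⟩ := h₁
    obtain ⟨a₂, ha₂, b₂, hb₂, rfl⟩ := h₂
    simp [eval, ihr ha₁ ha₂, ihs hb₁ hb₂]
  | inv r ih =>
    simp only [eval, Option.bind_eq_some_iff] at h₁ h₂
    obtain ⟨a₁, ha₁, h₁⟩ := h₁
    obtain ⟨a₂, ha₂, h₂⟩ := h₂
    split_ifs at h₁ h₂ with hu₁ hu₂
    cases h₁; cases h₂
    have hu : IsUnit (a₁, a₂) := Prod.isUnit_iff.mpr ⟨hu₁, hu₂⟩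
    simp [eval, ih ha₁ ha₂, hu, Ring.inverse_prod_of_isUnit hu]

end RatExpr

theorem Fin.castAdd_ne_natAdd {m n : ℕ} (i : Fin m) (j : Fin n) : castAdd n i ≠ natAdd m j := by
  simpa using finSumFinEquiv.injective.ne (Sum.inl_ne_inr (a := i) (b := j))

def Matrix.fromBlocksAlgHom (k : Type*) [CommRing k] (d d' : Type*) [Fintype d] [Fintype d']
    [DecidableEq d] [DecidableEq d'] :
    (Matrix d d k × Matrix d' d' k) →ₐ[k] Matrix (d ⊕ d') (d ⊕ d') k where
  toFun p := Matrix.fromBlocks p.1 0 0 p.2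
  map_one' := Matrix.fromBlocks_one
  map_mul' p q := by simp [Matrix.fromBlocks_multiply]
  map_zero' := by simp
  map_add' p q := by simp [Matrix.fromBlocks_add]
  commutes' c := by
    ext (i | i) (j | j) <;> simp [Matrix.algebraMap_matrix_apply]

section BlockDecomposition

variable {k : Type*} [Field k] {G : ℕ} (n : Fin G → ℕ) {n₁' n₁'' : ℕ}

theorem reindex_blockEquiv_fromBlocks_tauFst (A : Matrix (Fin n₁') (Fin n₁') k)
    (B : Matrix (Fin n₁'') (Fin n₁'') k) :
    Matrix.reindex (blockEquiv n n₁' n₁'').symm (blockEquiv n n₁' n₁'').symm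
        (Matrix.fromBlocks (tauFst n A) 0 0 (tauFst n B)) =
      tauFst n (Matrix.reindex finSumFinEquiv finSumFinEquiv (Matrix.fromBlocks A 0 0 B)) := by
  ext ⟨p, α⟩ ⟨q, β⟩
  obtain ⟨p, rfl⟩ := finSumFinEquiv.surjective p
  obtain ⟨q, rfl⟩ := finSumFinEquiv.surjective q
  cases p <;> cases q <;> simp [tauFst, blockEquiv, Equiv.sumProdDistrib]

theorem reindex_blockEquiv_fromBlocks_tauTail (i : Fin G) (A : Matrix (Fin (n i)) (Fin (n i)) k) :
    Matrix.reindex (blockEquiv n n₁' n₁'').symm (blockEquiv n n₁' n₁'').symm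
        (Matrix.fromBlocks (tauTail n i A) 0 0 (tauTail n i A)) = tauTail n i A := by
  ext ⟨p, α⟩ ⟨q, β⟩
  obtain ⟨p, rfl⟩ := finSumFinEquiv.surjective p
  obtain ⟨q, rfl⟩ := finSumFinEquiv.surjective q
  cases p <;> cases q <;>
    simp [tauTail, blockEquiv, Equiv.sumProdDistrib, Fin.castAdd_ne_natAdd,
      (Fin.castAdd_ne_natAdd _ _).symm]

end BlockDecomposition

theorem mp_eval_direct_sum_first_factor_general {k : Type*} [Field k]
    {G : ℕ} (g₁ : ℕ) (g n : Fin G → ℕ) (n₁' n₁'' : ℕ)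
    (r : RatExpr k ((Fin g₁) ⊕ (Σ i : Fin G, Fin (g i))))
    (a' : Fin g₁ → Matrix (Fin n₁') (Fin n₁') k)
    (a'' : Fin g₁ → Matrix (Fin n₁'') (Fin n₁'') k)
    (a : ∀ i, Fin (g i) → Matrix (Fin (n i)) (Fin (n i)) k)
    (E' : Matrix (Fin n₁' × ∀ j, Fin (n j)) (Fin n₁' × ∀ j, Fin (n j)) k)
    (E'' : Matrix (Fin n₁'' × ∀ j, Fin (n j)) (Fin n₁'' × ∀ j, Fin (n j)) k)
    (hE' : mpEvalFst g₁ g n r a' a = some E')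
    (hE'' : mpEvalFst g₁ g n r a'' a = some E'') :
    mpEvalFst g₁ g n r
      (fun j => Matrix.reindex finSumFinEquiv finSumFinEquiv
        (Matrix.fromBlocks (a' j) 0 0 (a'' j))) a =
    some (Matrix.reindex (blockEquiv n n₁' n₁'').symm (blockEquiv n n₁' n₁'').symm
      (Matrix.fromBlocks E' 0 0 E'')) := by
  let Φ := (Matrix.reindexAlgEquiv k k (blockEquiv n n₁' n₁'').symm).toAlgHom.comp
    (Matrix.fromBlocksAlgHom k _ _)
  unfold mpEvalFst at hE' hE'' ⊢
  convert RatExpr.eval_algHom_comp Φ (RatExpr.eval_prod hE' hE'') using 2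
  · funext x
    rcases x with j | v
    · exact (reindex_blockEquiv_fromBlocks_tauFst n (a' j) (a'' j)).symm
    · exact (reindex_blockEquiv_fromBlocks_tauTail n v.1 (a v.1 v.2)).symm
  · rfl

/-- Proposition 3.2(1). mp-evaluations respect direct sums in the first
factor: if `(a', a)` and `(a'', a)` are in the mp-domain of `r` at levels `(n₁', n₂, …, n_G)`
and `(n₁'', n₂, …, n_G)` respectively, then the componentwise block-diagonal direct sum
`(a' ⊕ a'', a)` is in the mp-domain at level `(n₁' + n₁'', n₂, …, n_G)` and, under the natural
block identification, the mp-evaluation is the direct sum of the two mp-evaluations. -/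
theorem mp_eval_direct_sum_first_factor {k : Type*} [Field k] [CharZero k]
    {G : ℕ} (g₁ : ℕ) (g n : Fin G → ℕ) (n₁' n₁'' : ℕ)
    (r : RatExpr k ((Fin g₁) ⊕ (Σ i : Fin G, Fin (g i))))
    (a' : Fin g₁ → Matrix (Fin n₁') (Fin n₁') k)
    (a'' : Fin g₁ → Matrix (Fin n₁'') (Fin n₁'') k)
    (a : ∀ i, Fin (g i) → Matrix (Fin (n i)) (Fin (n i)) k)
    (E' : Matrix (Fin n₁' × ∀ j, Fin (n j)) (Fin n₁' × ∀ j, Fin (n j)) k)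
    (E'' : Matrix (Fin n₁'' × ∀ j, Fin (n j)) (Fin n₁'' × ∀ j, Fin (n j)) k)
    (hE' : mpEvalFst g₁ g n r a' a = some E')
    (hE'' : mpEvalFst g₁ g n r a'' a = some E'') :
    mpEvalFst g₁ g n r
      (fun j => Matrix.reindex finSumFinEquiv finSumFinEquiv
        (Matrix.fromBlocks (a' j) 0 0 (a'' j))) a =
    some (Matrix.reindex (blockEquiv n n₁' n₁'').symm (blockEquiv n n₁' n₁'').symm
      (Matrix.fromBlocks E' 0 0 E'')) :=
  mp_eval_direct_sum_first_factor_general g₁ g n n₁' n₁'' r a' a'' a E' E'' hE' hE''
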